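/- Let u_1,...,u_N be unit vectors in R^d with centered vectors v_i = u_i − ū where ū is the mean. Then ∑_i ‖v_i‖_1 = (1/N)∑_i ‖v_i‖_2² holds if and only if all u_i are equal. -/

import Mathlib

open Finset

noncomputable def l1norm {d : ℕ} (v : Fin d → ℝ) : ℝ := ∑ j, |v j|
noncomputable def l2norm {d : ℕ} (v : Fin d → ℝ) : ℝ := Real.sqrt (∑ j, (v j) ^ 2)

lemma l2norm_eq_norm {d : ℕ} (v : EuclideanSpace ℝ (Fin d)) : l2norm v = ‖v‖ := by
  rw [EuclideanSpace.norm_eq]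
  simp [l2norm, sq_abs]

lemma l2_le_l1 {d : ℕ} (v : Fin d → ℝ) : l2norm v ≤ l1norm v := by
  have h0 : (0:ℝ) ≤ l1norm v := Finset.sum_nonneg fun j _ => abs_nonneg _
  have h : ∑ j, (v j)^2 ≤ (l1norm v)^2 := by
    have hb : ∀ j ∈ (univ : Finset (Fin d)), (v j)^2 ≤ |v j| * l1norm v := by
      intro j _
      rw [← sq_abs]
      have hj : |v j| ≤ l1norm v := Finset.single_le_sum (fun k _ => abs_nonneg (v k)) (mem_univ j)
      nlinarith [abs_nonneg (v j)]
    calc ∑ j, (v j)^2 ≤ ∑ j, |v j| * l1norm v := Finset.sum_le_sum hb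
      _ = (l1norm v)^2 := by rw [← Finset.sum_mul, l1norm, sq]
  calc l2norm v = Real.sqrt (∑ j, (v j)^2) := rfl
    _ ≤ Real.sqrt ((l1norm v)^2) := Real.sqrt_le_sqrt h
    _ = l1norm v := Real.sqrt_sq h0

lemma l2norm_pos {d : ℕ} (v : Fin d → ℝ) (h : v ≠ 0) : 0 < l2norm v := by
  apply Real.sqrt_pos.mpr
  obtain ⟨j, hj⟩ := Function.ne_iff.mp h
  exact Finset.sum_pos' (fun k _ => sq_nonneg _) ⟨j, mem_univ j, sq_pos_of_ne_zero hj⟩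

lemma norm_center_le {N d : ℕ} (hN : 2 ≤ N) (U : Fin N → EuclideanSpace ℝ (Fin d))
    (hU : ∀ i, ‖U i‖ = 1) (i : Fin N) :
    ‖U i - (N:ℝ)⁻¹ • ∑ j, U j‖ ≤ 2 - 2 / N := by
  have hN0 : (N:ℝ) ≠ 0 := by positivity
  have hVi : U i - (N:ℝ)⁻¹ • ∑ j, U j = (N:ℝ)⁻¹ • ∑ j, (U i - U j) := by
    have hsum : ∑ j, (U i - U j) = (N:ℝ) • U i - ∑ j, U j := by
      rw [Finset.sum_sub_distrib, Finset.sum_const, Finset.card_univ, Fintype.card_fin,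
        ← Nat.cast_smul_eq_nsmul ℝ]
    rw [hsum, smul_sub, inv_smul_smul₀ hN0]
  rw [hVi, norm_smul]
  have hterm : ∑ j, ‖U i - U j‖ ≤ 2 * ((N:ℝ) - 1) := by
    have hsplit := Finset.sum_erase_add univ (fun j => ‖U i - U j‖) (mem_univ i)
    have hzero : ‖U i - U i‖ = 0 := by simp
    have hle : ∑ j ∈ univ.erase i, ‖U i - U j‖ ≤ ∑ _j ∈ univ.erase i, (2:ℝ) := by
      apply Finset.sum_le_sum
      intro j _
      calc ‖U i - U j‖ ≤ ‖U i‖ + ‖U j‖ := norm_sub_le _ _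
        _ = 2 := by rw [hU, hU]; norm_num
    have hcard : ((univ.erase i).card : ℝ) = (N:ℝ) - 1 := by
      rw [Finset.card_erase_of_mem (mem_univ i), Finset.card_univ, Fintype.card_fin]
      have h1 : 1 ≤ N := by omega
      push_cast [Nat.cast_sub h1]
      ring
    calc ∑ j, ‖U i - U j‖ = ∑ j ∈ univ.erase i, ‖U i - U j‖ + ‖U i - U i‖ := hsplit.symm
      _ = ∑ j ∈ univ.erase i, ‖U i - U j‖ := by rw [hzero, add_zero]
      _ ≤ ∑ _j ∈ univ.erase i, (2:ℝ) := hle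
      _ = 2 * ((N:ℝ) - 1) := by rw [Finset.sum_const, nsmul_eq_mul, hcard]; ring
  have hnormsum : ‖∑ j, (U i - U j)‖ ≤ 2 * ((N:ℝ) - 1) := le_trans (norm_sum_le _ _) hterm
  have h1 : ‖(N:ℝ)⁻¹‖ = (N:ℝ)⁻¹ := by rw [Real.norm_eq_abs, abs_of_pos]; positivity
  rw [h1, inv_mul_le_iff₀ (by positivity : (0:ℝ) < (N:ℝ))]
  calc ‖∑ j, (U i - U j)‖ ≤ 2 * ((N:ℝ) - 1) := hnormsum
    _ = (N:ℝ) * (2 - 2 / N) := by field_simp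

theorem stmt11 {d N : ℕ} (hN : 2 ≤ N) (u : Fin N → Fin d → ℝ)
    (hu : ∀ i, l2norm (u i) = 1)
    (ubar : Fin d → ℝ) (hubar : ubar = (N : ℝ)⁻¹ • ∑ i, u i)
    (v : Fin N → Fin d → ℝ) (hv : ∀ i, v i = u i - ubar) :
    (∑ i, l1norm (v i) = (N : ℝ)⁻¹ * ∑ i, (l2norm (v i)) ^ 2) ↔
      (∀ i j, u i = u j) := by
  have hNR : (2:ℝ) ≤ (N:ℝ) := by exact_mod_cast hN
  have hN0 : (N:ℝ) ≠ 0 := by positivity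
  have hNpos : (0:ℝ) < (N:ℝ) := by positivity
  have hUnorm : ∀ i, ‖(WithLp.toLp 2 (u i) : EuclideanSpace ℝ (Fin d))‖ = 1 :=
    fun i => (l2norm_eq_norm (WithLp.toLp 2 (u i))).symm.trans (hu i)
  have hbd : ∀ i, l2norm (v i) ≤ 2 - 2 / N := by
    intro i
    rw [hv i, hubar]
    have h := norm_center_le hN (fun j => (WithLp.toLp 2 (u j) : EuclideanSpace ℝ (Fin d))) hUnorm i
    have e : (WithLp.toLp 2 (u i) : EuclideanSpace ℝ (Fin d)) - (N:ℝ)⁻¹ • ∑ j, WithLp.toLp 2 (u j)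
        = WithLp.toLp 2 (u i - (N:ℝ)⁻¹ • ∑ j, u j) := by
      simp [WithLp.toLp_sum]
    beta_reduce at h
    rw [e, ← l2norm_eq_norm] at h
    exact h
  -- termwise inequality
  have hterm_le : ∀ i, (N:ℝ)⁻¹ * (l2norm (v i))^2 ≤ l1norm (v i) := by
    intro i
    have hab : l2norm (v i) ≤ l1norm (v i) := l2_le_l1 _
    have hb0 : (0:ℝ) ≤ l1norm (v i) := Finset.sum_nonneg fun j _ => abs_nonneg _
    have ha0 : (0:ℝ) ≤ l2norm (v i) := Real.sqrt_nonneg _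
    have h2n : (0:ℝ) ≤ 2 - 2 / N := by
      have : 2 / (N:ℝ) ≤ 1 := by rw [div_le_one hNpos]; linarith
      linarith
    have h1 : l2norm (v i) * l2norm (v i) ≤ (2 - 2 / N) * l1norm (v i) :=
      mul_le_mul (hbd i) hab ha0 h2n
    have h2 : (2 - 2 / (N:ℝ)) ≤ (N:ℝ) := by
      have : (0:ℝ) ≤ 2 / N := by positivity
      linarith
    have h3 : (2 - 2 / (N:ℝ)) * l1norm (v i) ≤ (N:ℝ) * l1norm (v i) :=
      mul_le_mul_of_nonneg_right h2 hb0
    rw [sq, inv_mul_le_iff₀ hNpos]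
    linarith
  constructor
  · intro heq
    have hsum0 : ∑ i, (l1norm (v i) - (N:ℝ)⁻¹ * (l2norm (v i))^2) = 0 := by
      rw [Finset.sum_sub_distrib, ← Finset.mul_sum, heq]; ring
    have hall : ∀ i ∈ (univ : Finset (Fin N)),
        l1norm (v i) - (N:ℝ)⁻¹ * (l2norm (v i))^2 = 0 :=
      (Finset.sum_eq_zero_iff_of_nonneg (fun i _ => by linarith [hterm_le i])).mp hsum0
    have hv0 : ∀ i, v i = 0 := by
      intro i
      by_contra hne
      have ha0 : 0 < l2norm (v i) := l2norm_pos _ hne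
      have heqi := hall i (mem_univ i)
      have hab : l2norm (v i) ≤ l1norm (v i) := l2_le_l1 _
      set a := l2norm (v i)
      set b := l1norm (v i)
      have hb : b = (N:ℝ)⁻¹ * a^2 := by linarith
      have hnb : (N:ℝ) * b = a^2 := by rw [hb]; field_simp
      have hna : (N:ℝ) * a ≤ a * a := by nlinarith
      have hge : (N:ℝ) ≤ a := by
        have := (mul_le_mul_iff_left₀ ha0).mp hna
        linarith
      have hlt : a < (N:ℝ) := by
        have h2n : 0 < 2 / (N:ℝ) := by positivity
        have := hbd i
        linarith
      linarith
    intro i j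
    have hi : u i = ubar := sub_eq_zero.mp ((hv i).symm.trans (hv0 i))
    have hj : u j = ubar := sub_eq_zero.mp ((hv j).symm.trans (hv0 j))
    rw [hi, hj]
  · intro hall
    have i0 : Fin N := ⟨0, by omega⟩
    have hub : ubar = u i0 := by
      rw [hubar]
      have hsum : ∑ j, u j = N • u i0 := by
        rw [Finset.sum_congr rfl (fun j _ => hall j i0), Finset.sum_const, Finset.card_univ,
          Fintype.card_fin]
      rw [hsum, ← Nat.cast_smul_eq_nsmul ℝ, inv_smul_smul₀ hN0]
    have hv0 : ∀ i, v i = 0 := fun i => by rw [hv i, hub, hall i i0, sub_self]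
    simp [hv0, l1norm, l2norm]
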